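/- arXiv:1204.3784 — 8 statements merged into one kernel-verified Lean document; each statement's English description precedes it below -/
import Mathlib

section
/- Let δ ∈ {0,1}, let V ⊆ ℂ be open, let h, r : V → ℂ be complex-differentiable with r'(t) = −(δ + 1/2)h(t) on V, and let φ : ℂ × V → ℂ be complex-differentiable in t and twice complex-differentiable in z at every point. Set u(t) = (1/2)(h'(t) + h(t)²) and ψ(z,t) = exp(−(1/2)h(t)z² + r(t)) φ(z,t). Then ψ solves the heat equation ∂ψ/∂t = (1/2)∂²ψ/∂z² on ℂ × V if and only if φ satisfies ∂φ/∂t = (1/2)∂²φ/∂z² + u(t) z² φ − h(t)(z ∂φ/∂z − δφ) on ℂ × V. -/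
/-! With `E = exp (-(1/2) h(t) z² + r(t))`, the product rule gives
`ψ_t - ψ_zz / 2 = E · (φ_t - φ_zz / 2 - u z² φ + h (z φ_z - δ φ))` once `r' = -(δ + 1/2) h`
is substituted; since `E` never vanishes, the two equations are equivalent pointwise. -/

open Complex

section GaussianFactor

variable (c d : ℂ) {f : ℂ → ℂ} {f' z : ℂ}

theorem hasDerivAt_exp_gaussian (z : ℂ) :
    HasDerivAt (fun w => cexp (-(1 / 2) * c * w ^ 2 + d))
      (cexp (-(1 / 2) * c * z ^ 2 + d) * -(c * z)) z := by
  have hq : HasDerivAt (fun w => -(1 / 2) * c * w ^ 2 + d) (-(c * z)) z := by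
    refine (((hasDerivAt_pow 2 z).const_mul (-(1 / 2) * c)).add_const d).congr_deriv ?_
    push_cast
    ring
  exact hq.cexp

theorem HasDerivAt.exp_gaussian_mul (hf : HasDerivAt f f' z) :
    HasDerivAt (fun w => cexp (-(1 / 2) * c * w ^ 2 + d) * f w)
      (cexp (-(1 / 2) * c * z ^ 2 + d) * (f' - c * z * f z)) z :=
  ((hasDerivAt_exp_gaussian c d z).mul hf).congr_deriv (by ring)

theorem deriv_deriv_exp_gaussian_mul (hf : Differentiable ℂ f)
    (hf' : DifferentiableAt ℂ (deriv f) z) :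
    deriv (deriv fun w => cexp (-(1 / 2) * c * w ^ 2 + d) * f w) z =
      cexp (-(1 / 2) * c * z ^ 2 + d) *
        (deriv (deriv f) z - 2 * c * z * deriv f z + (c ^ 2 * z ^ 2 - c) * f z) := by
  have hfirst : (deriv fun w => cexp (-(1 / 2) * c * w ^ 2 + d) * f w) =
      fun w => cexp (-(1 / 2) * c * w ^ 2 + d) * (deriv f w - c * w * f w) :=
    funext fun w => ((hf w).hasDerivAt.exp_gaussian_mul c d).deriv
  have hinner : HasDerivAt (fun w => deriv f w - c * w * f w)
      (deriv (deriv f) z - (c * f z + c * z * deriv f z)) z :=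
    (hf'.hasDerivAt.sub (((hasDerivAt_id z).const_mul c).mul (hf z).hasDerivAt)).congr_deriv
      (by simp)
  rw [hfirst, (hinner.exp_gaussian_mul c d).deriv]
  ring

end GaussianFactor

theorem HasDerivAt.exp_gaussian_param_mul {a b f : ℂ → ℂ} {a' b' f' t : ℂ}
    (ha : HasDerivAt a a' t) (hb : HasDerivAt b b' t) (hf : HasDerivAt f f' t) (z : ℂ) :
    HasDerivAt (fun s => cexp (-(1 / 2) * a s * z ^ 2 + b s) * f s)
      (cexp (-(1 / 2) * a t * z ^ 2 + b t) * ((-(1 / 2) * a' * z ^ 2 + b') * f t + f')) t := by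
  have hq : HasDerivAt (fun s => -(1 / 2) * a s * z ^ 2 + b s) (-(1 / 2) * a' * z ^ 2 + b') t :=
    ((ha.const_mul _).mul_const _).add hb
  exact (hq.cexp.mul hf).congr_deriv (by ring)

theorem heat_equation_ansatz_iff_general
    (δ : ℕ)
    (V : Set ℂ) (hV : IsOpen V)
    (h r : ℂ → ℂ) (hh : DifferentiableOn ℂ h V) (hr : DifferentiableOn ℂ r V)
    (hr' : ∀ t ∈ V, deriv r t = -((δ : ℂ) + 1 / 2) * h t)
    (φ : ℂ → ℂ → ℂ)
    (hφt : ∀ z : ℂ, ∀ t ∈ V, DifferentiableAt ℂ (fun u => φ z u) t)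
    (hφz : ∀ z : ℂ, ∀ t ∈ V, DifferentiableAt ℂ (fun w => φ w t) z ∧
      DifferentiableAt ℂ (deriv fun w => φ w t) z)
    (u : ℂ → ℂ) (hu : ∀ t, u t = (1 / 2) * (deriv h t + h t ^ 2))
    (ψ : ℂ → ℂ → ℂ)
    (hψ : ∀ z t, ψ z t = Complex.exp (-(1 / 2) * h t * z ^ 2 + r t) * φ z t) :
    (∀ z : ℂ, ∀ t ∈ V,
        deriv (fun v => ψ z v) t = (1 / 2) * deriv (deriv fun w => ψ w t) z) ↔
    (∀ z : ℂ, ∀ t ∈ V,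
        deriv (fun v => φ z v) t =
          (1 / 2) * deriv (deriv fun w => φ w t) z + u t * z ^ 2 * φ z t
            - h t * (z * deriv (fun w => φ w t) z - (δ : ℂ) * φ z t)) := by
  obtain rfl : ψ = fun z t => cexp (-(1 / 2) * h t * z ^ 2 + r t) * φ z t :=
    funext fun z => funext (hψ z)
  refine forall_congr' fun z => forall₂_congr fun t ht => ?_
  have hψt := HasDerivAt.exp_gaussian_param_mul
    (hh.differentiableAt (hV.mem_nhds ht)).hasDerivAt
    (hr.differentiableAt (hV.mem_nhds ht)).hasDerivAt (hφt z t ht).hasDerivAt z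
  rw [hψt.deriv, deriv_deriv_exp_gaussian_mul _ _ (fun w => (hφz w t ht).1) (hφz z t ht).2,
    hu, hr' t ht, mul_left_comm, mul_right_inj' (Complex.exp_ne_zero _)]
  constructor <;> intro H <;> linear_combination H

/-- Theorem 4 (paper Thm 3.1): `ψ(z,t) = exp(-(1/2)h(t)z² + r(t)) φ(z,t)`
solves the heat equation iff `φ` satisfies
`∂φ/∂t = (1/2)∂²φ/∂z² + u z² φ - h (z ∂φ/∂z - δ φ)` where
`u = (1/2)(h' + h²)` and `r' = -(δ + 1/2)h`. -/
theorem heat_equation_ansatz_iff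
    (δ : ℕ) (hδ : δ = 0 ∨ δ = 1)
    (V : Set ℂ) (hV : IsOpen V)
    (h r : ℂ → ℂ) (hh : DifferentiableOn ℂ h V) (hr : DifferentiableOn ℂ r V)
    (hr' : ∀ t ∈ V, deriv r t = -((δ : ℂ) + 1 / 2) * h t)
    (φ : ℂ → ℂ → ℂ)
    (hφt : ∀ z : ℂ, ∀ t ∈ V, DifferentiableAt ℂ (fun u => φ z u) t)
    (hφz : ∀ z : ℂ, ∀ t ∈ V, DifferentiableAt ℂ (fun w => φ w t) z ∧
      DifferentiableAt ℂ (deriv fun w => φ w t) z)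
    (u : ℂ → ℂ) (hu : ∀ t, u t = (1 / 2) * (deriv h t + h t ^ 2))
    (ψ : ℂ → ℂ → ℂ)
    (hψ : ∀ z t, ψ z t = Complex.exp (-(1 / 2) * h t * z ^ 2 + r t) * φ z t) :
    (∀ z : ℂ, ∀ t ∈ V,
        deriv (fun v => ψ z v) t = (1 / 2) * deriv (deriv fun w => ψ w t) z) ↔
    (∀ z : ℂ, ∀ t ∈ V,
        deriv (fun v => φ z v) t =
          (1 / 2) * deriv (deriv fun w => φ w t) z + u t * z ^ 2 * φ z t
            - h t * (z * deriv (fun w => φ w t) z - (δ : ℂ) * φ z t)) :=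
  heat_equation_ansatz_iff_general δ V hV h r hh hr hr' φ hφt hφz u hu ψ hψ
end

section
/- Let n ≥ 1, δ ∈ {0,1}, and let R = ℂ[x₂,…,x_{n+1}] be a polynomial ring. Let p₃,…,p_{n+2} ∈ R, let L₂ : R → R be the ℂ-linear derivation determined by L₂(x_k) = p_{k+1} for k = 2,…,n+1, and let u ∈ R. Let (Φ_k)_{k≥2} be a sequence in R and let Φ ∈ R[[X]] be the formal power series Φ = X^δ + Σ_{k≥2} Φ_k X^{2k+δ}/(2k+δ)!. Then the identity (1/2)Φ'' + u X² Φ = L₂Φ holds in R[[X]] (where Φ'' is the second formal derivative in X and L₂ acts coefficientwise) if and only if Φ₂ = −4(1+2δ)u, Φ₃ = 2 L₂Φ₂, and Φ_{k+1} = 2 L₂Φ_k + ((2k+δ−1)(2k+δ)/(2(1+2δ))) Φ₂ Φ_{k−1} for all k ≥ 3. -/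
/-!
Write `Φ = Σ b_m X^m / m!`. In these exponential coordinates `d/dX` shifts `b` and
multiplication by `X` sends `b_m` to `m b_{m-1}`, so the equation says exactly
`(1/2) b_{m+2} + m(m-1) u b_{m-2} = L₂ b_m` for all `m`. Only indices `m = 2k + δ` carry
information, where `b_{2k+δ} = Φ_k` with `Φ_0 = 1`, `Φ_1 = 0`; the relations at `k = 1, 2, ≥ 3`
are the three stated conditions, after substituting the value of `Φ₂` found at `k = 1`.
-/

open scoped Nat

theorem inv_factorial_succ_mul (m : ℕ) : ((m + 1)! : ℚ)⁻¹ * (m + 1 : ℕ) = (m ! : ℚ)⁻¹ := by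
  rw [Nat.factorial_succ]; push_cast; field_simp

namespace PowerSeries

variable {R : Type*} [CommRing R] [Algebra ℚ R]

noncomputable def egf (b : ℕ → R) : R⟦X⟧ := mk fun m => (m ! : ℚ)⁻¹ • b m

@[simp]
theorem coeff_egf (b : ℕ → R) (m : ℕ) : coeff m (egf b) = (m ! : ℚ)⁻¹ • b m :=
  coeff_mk _ _

theorem egf_injective : Function.Injective (egf (R := R)) := by
  intro b c h
  funext m
  have hm := congrArg (coeff m) h
  rw [coeff_egf, coeff_egf] at hm
  exact (smul_right_injective R (inv_ne_zero (by positivity))) hm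

theorem egf_add (b c : ℕ → R) : egf (b + c) = egf b + egf c := by
  ext m; simp [smul_add]

theorem C_mul_egf (r : R) (b : ℕ → R) : C r * egf b = egf fun m => r * b m := by
  ext m; simp

theorem derivative_egf (b : ℕ → R) : d⁄dX R (egf b) = egf fun m => b (m + 1) := by
  ext m
  rw [coeff_derivative, coeff_egf, coeff_egf, smul_mul_assoc, mul_comm, ← Nat.cast_succ,
    ← nsmul_eq_mul, ← Nat.cast_smul_eq_nsmul ℚ, smul_smul, inv_factorial_succ_mul]

theorem X_mul_egf (b : ℕ → R) : X * egf b = egf fun m => (m : R) * b (m - 1) := by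
  ext m
  rcases m with _ | m
  · simp
  · rw [coeff_succ_X_mul, coeff_egf, coeff_egf, ← inv_factorial_succ_mul, mul_smul,
      ← nsmul_eq_mul, Nat.cast_smul_eq_nsmul ℚ, add_tsub_cancel_right]

theorem mk_map_coeff_egf {F : Type*} [FunLike F R R] [AddMonoidHomClass F R R] (L : F)
    (b : ℕ → R) : (mk fun m => L (coeff m (egf b))) = egf fun m => L (b m) := by
  ext m; simp [map_rat_smul]

/-- For `m < 2` the junk value `b (m - 2) = b 0` is harmless: it is multiplied by `m (m - 1) = 0`. -/
theorem heat_egf_iff {F : Type*} [FunLike F R R] [AddMonoidHomClass F R R] (c u : R) (L : F)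
    (b : ℕ → R) :
    C c * d⁄dX R (d⁄dX R (egf b)) + C u * X ^ 2 * egf b = (mk fun m => L (coeff m (egf b))) ↔
      ∀ m, c * b (m + 2) + (m * (m - 1) : ℕ) * u * b (m - 2) = L (b m) := by
  rw [derivative_egf, derivative_egf, C_mul_egf, pow_two, mul_assoc, mul_assoc, X_mul_egf,
    X_mul_egf, C_mul_egf, ← egf_add, mk_map_coeff_egf, egf_injective.eq_iff, funext_iff]
  refine forall_congr' fun m => ?_
  rw [Pi.add_apply, Nat.sub_sub, Nat.cast_mul]
  ring_nf

end PowerSeries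

namespace HeatSeries

variable {R : Type*}

def spread [Zero R] (δ : ℕ) (ψ : ℕ → R) (m : ℕ) : R := if m % 2 = δ then ψ (m / 2) else 0

theorem spread_two_mul_add [Zero R] {δ : ℕ} (hδ : δ < 2) (ψ : ℕ → R) (k : ℕ) :
    spread δ ψ (2 * k + δ) = ψ k := by
  rw [spread, if_pos (by omega), show (2 * k + δ) / 2 = k by omega]

theorem spread_of_mod_ne [Zero R] {δ m : ℕ} (ψ : ℕ → R) (h : m % 2 ≠ δ) : spread δ ψ m = 0 :=
  if_neg h

theorem forall_spread_iff [CommRing R] {F : Type*} [FunLike F R R] [AddMonoidHomClass F R R]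
    {δ : ℕ} (hδ : δ < 2) (c u : R) (L : F) (ψ : ℕ → R) :
    (∀ m, c * spread δ ψ (m + 2) + (m * (m - 1) : ℕ) * u * spread δ ψ (m - 2) =
        L (spread δ ψ m)) ↔
      ∀ k, c * ψ (k + 1) + ((2 * k + δ) * (2 * k + δ - 1) : ℕ) * u * ψ (k - 1) = L (ψ k) := by
  have on_parity : ∀ k, c * spread δ ψ (2 * k + δ + 2) +
      ((2 * k + δ) * (2 * k + δ - 1) : ℕ) * u * spread δ ψ (2 * k + δ - 2) =
        L (spread δ ψ (2 * k + δ)) ↔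
      c * ψ (k + 1) + ((2 * k + δ) * (2 * k + δ - 1) : ℕ) * u * ψ (k - 1) = L (ψ k) := by
    intro k
    rw [show 2 * k + δ + 2 = 2 * (k + 1) + δ by omega, spread_two_mul_add hδ,
      spread_two_mul_add hδ]
    rcases k with _ | k
    · have : δ * (δ - 1) = 0 := by interval_cases δ <;> rfl
      simp [this]
    · rw [show 2 * (k + 1) + δ - 2 = 2 * k + δ by omega, spread_two_mul_add hδ,
        add_tsub_cancel_right]
  have off_parity : ∀ m, m % 2 ≠ δ → c * spread δ ψ (m + 2) +
      (m * (m - 1) : ℕ) * u * spread δ ψ (m - 2) = L (spread δ ψ m) := by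
    intro m hm
    rw [spread_of_mod_ne ψ (m := m + 2) (by omega), spread_of_mod_ne ψ hm, map_zero, mul_zero,
      zero_add]
    rcases lt_or_ge m 2 with h | h
    · have : m * (m - 1) = 0 := by interval_cases m <;> rfl
      rw [this, Nat.cast_zero, zero_mul, zero_mul]
    · rw [spread_of_mod_ne ψ (m := m - 2) (by omega), mul_zero]
  refine ⟨fun h k => (on_parity k).1 (h _), fun h m => ?_⟩
  by_cases hm : m % 2 = δ
  · rw [← Nat.div_add_mod m 2, hm]
    exact (on_parity _).2 (h _)
  · exact off_parity m hm

/-- The paper's coefficients, completed by `Φ_0 = 1` and `Φ_1 = 0`. -/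
def seriesCoeff [Zero R] [One R] (Φ : ℕ → R) : ℕ → R
  | 0 => 1
  | 1 => 0
  | k + 2 => Φ (k + 2)

theorem seriesCoeff_of_two_le [Zero R] [One R] (Φ : ℕ → R) {k : ℕ} (hk : 2 ≤ k) :
    seriesCoeff Φ k = Φ k := by
  obtain ⟨j, rfl⟩ := Nat.exists_eq_add_of_le' hk
  rfl

variable {K : Type*} [Field K] [CharZero K] [CommRing R] [Algebra K R]

theorem algebraMap_inv_natCast_mul [Algebra ℚ R] (n : ℕ) (x : R) :
    algebraMap K R (n : K)⁻¹ * x = (n : ℚ)⁻¹ • x := by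
  rw [← Algebra.smul_def]
  simpa using ratCast_smul_eq K ℚ (n : ℚ)⁻¹ x

open PowerSeries in
theorem X_pow_add_mk_eq_egf [Algebra ℚ R] {δ : ℕ} (hδ : δ < 2) (Φ : ℕ → R) :
    X ^ δ + (mk fun m => if 4 + δ ≤ m ∧ (m - δ) % 2 = 0 then
        algebraMap K R (m ! : K)⁻¹ * Φ ((m - δ) / 2) else 0) =
      egf (spread δ (seriesCoeff Φ)) := by
  ext m
  rw [map_add, coeff_X_pow, coeff_mk, coeff_egf]
  by_cases hm : m % 2 = δ
  · obtain ⟨k, rfl⟩ : ∃ k, m = 2 * k + δ := ⟨m / 2, by omega⟩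
    rw [spread_two_mul_add hδ]
    match k with
    | 0 => simp [seriesCoeff, show δ ! = 1 by interval_cases δ <;> rfl]
    | 1 => simp [seriesCoeff]
    | k + 2 =>
      rw [if_neg (by omega), if_pos (by omega), show (2 * (k + 2) + δ - δ) / 2 = k + 2 by omega,
        algebraMap_inv_natCast_mul, zero_add]
      rfl
  · rw [spread_of_mod_ne _ hm, if_neg (by omega), if_neg (by omega), smul_zero, add_zero]

theorem half_mul_add_eq_iff (x y z : R) :
    algebraMap K R (1 / 2) * x + y = z ↔ x = 2 * (z - y) := by
  have h : (2 : R) * algebraMap K R (1 / 2) = 1 := by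
    rw [← map_ofNat (algebraMap K R) 2, ← map_mul]; norm_num
  constructor
  · rintro rfl; linear_combination -x * h
  · rintro rfl; linear_combination (z - y) * h

theorem heat_recursion_iff {F : Type*} [FunLike F R R] [AddMonoidHomClass F R R] {δ : ℕ}
    (hδ : δ = 0 ∨ δ = 1) (u : R) (Φ : ℕ → R) (L : F) (hL : L 1 = 0) :
    (∀ k, algebraMap K R (1 / 2) * seriesCoeff Φ (k + 1) +
        ((2 * k + δ) * (2 * k + δ - 1) : ℕ) * u * seriesCoeff Φ (k - 1) = L (seriesCoeff Φ k)) ↔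
      Φ 2 = algebraMap K R (-4 * (1 + 2 * δ)) * u ∧ Φ 3 = 2 * L (Φ 2) ∧
        ∀ k ≥ 3, Φ (k + 1) = 2 * L (Φ k) +
          algebraMap K R ((2 * k + δ - 1) * (2 * k + δ) / (2 * (1 + 2 * δ))) *
            (Φ 2 * Φ (k - 1)) := by
  have hδ' : δ * (δ - 1) = 0 := by rcases hδ with rfl | rfl <;> rfl
  have hunit : (1 + 2 * δ : K) ≠ 0 := by rcases hδ with rfl | rfl <;> norm_num
  have initial : algebraMap K R (1 / 2) * seriesCoeff Φ 1 +
      ((2 * 0 + δ) * (2 * 0 + δ - 1) : ℕ) * u * seriesCoeff Φ (0 - 1) = L (seriesCoeff Φ 0) := by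
    simp [seriesCoeff, hδ', hL]
  have first : algebraMap K R (1 / 2) * seriesCoeff Φ 2 +
      ((2 * 1 + δ) * (2 * 1 + δ - 1) : ℕ) * u * seriesCoeff Φ (1 - 1) = L (seriesCoeff Φ 1) ↔
      Φ 2 = algebraMap K R (-4 * (1 + 2 * δ)) * u := by
    rw [half_mul_add_eq_iff]
    rcases hδ with rfl | rfl <;> norm_num [seriesCoeff, map_ofNat] <;> ring_nf
  have second : algebraMap K R (1 / 2) * seriesCoeff Φ 3 +
      ((2 * 2 + δ) * (2 * 2 + δ - 1) : ℕ) * u * seriesCoeff Φ (2 - 1) = L (seriesCoeff Φ 2) ↔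
      Φ 3 = 2 * L (Φ 2) := by
    rw [half_mul_add_eq_iff]
    simp [seriesCoeff]
  have general : Φ 2 = algebraMap K R (-4 * (1 + 2 * δ)) * u → ∀ k ≥ 3,
      (algebraMap K R (1 / 2) * seriesCoeff Φ (k + 1) +
        ((2 * k + δ) * (2 * k + δ - 1) : ℕ) * u * seriesCoeff Φ (k - 1) = L (seriesCoeff Φ k) ↔
      Φ (k + 1) = 2 * L (Φ k) +
        algebraMap K R ((2 * k + δ - 1) * (2 * k + δ) / (2 * (1 + 2 * δ))) *
          (Φ 2 * Φ (k - 1))) := by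
    intro hΦ₂ k hk
    rw [half_mul_add_eq_iff, seriesCoeff_of_two_le Φ (by omega),
      seriesCoeff_of_two_le Φ (by omega), seriesCoeff_of_two_le Φ (by omega), hΦ₂]
    have hcoeff : (((2 * k + δ) * (2 * k + δ - 1) : ℕ) : K) * -2 =
        (2 * k + δ - 1) * (2 * k + δ) / (2 * (1 + 2 * δ)) * (-4 * (1 + 2 * δ)) := by
      rw [Nat.cast_mul, Nat.cast_sub (by omega)]
      push_cast
      field_simp
      ring
    have hcoeffR := congrArg (algebraMap K R) hcoeff
    rw [map_mul, map_mul, map_natCast, map_neg, map_ofNat] at hcoeffR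
    constructor <;> intro h
    · linear_combination h + u * Φ (k - 1) * hcoeffR
    · linear_combination h - u * Φ (k - 1) * hcoeffR
  constructor
  · intro h
    have hΦ₂ := first.1 (h 1)
    exact ⟨hΦ₂, second.1 (h 2), fun k hk => (general hΦ₂ k hk).1 (h k)⟩
  · rintro ⟨hΦ₂, hΦ₃, hrec⟩ k
    match k with
    | 0 => exact initial
    | 1 => exact first.2 hΦ₂
    | 2 => exact second.2 hΦ₃
    | k + 3 => exact (general hΦ₂ (k + 3) (by omega)).2 (hrec _ (by omega))

end HeatSeries

open HeatSeries PowerSeries in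
theorem series_heat_recursion_iff_general
    (n : ℕ) (δ : ℕ) (hδ : δ = 0 ∨ δ = 1)
    (L₂ : Derivation ℂ (MvPolynomial (Fin n) ℂ) (MvPolynomial (Fin n) ℂ))
    (u : MvPolynomial (Fin n) ℂ)
    (Φ : ℕ → MvPolynomial (Fin n) ℂ)
    (Φser : PowerSeries (MvPolynomial (Fin n) ℂ))
    (hΦser : Φser = PowerSeries.X ^ δ + PowerSeries.mk fun m =>
      if 4 + δ ≤ m ∧ (m - δ) % 2 = 0 then
        MvPolynomial.C ((m.factorial : ℂ))⁻¹ * Φ ((m - δ) / 2) else 0) :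
    (PowerSeries.C (R := MvPolynomial (Fin n) ℂ) (MvPolynomial.C ((1 : ℂ) / 2)) *
          PowerSeries.derivative (R := MvPolynomial (Fin n) ℂ)
            (PowerSeries.derivative (R := MvPolynomial (Fin n) ℂ) Φser)
        + PowerSeries.C (R := MvPolynomial (Fin n) ℂ) u * PowerSeries.X ^ 2 * Φser
      = PowerSeries.mk fun m => L₂ (PowerSeries.coeff (R := MvPolynomial (Fin n) ℂ) m Φser)) ↔
    (Φ 2 = MvPolynomial.C (-4 * (1 + 2 * (δ : ℂ))) * u ∧
     Φ 3 = 2 * L₂ (Φ 2) ∧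
     ∀ k ≥ 3, Φ (k + 1) = 2 * L₂ (Φ k) +
       MvPolynomial.C (((2 * (k : ℂ) + (δ : ℂ) - 1) * (2 * (k : ℂ) + (δ : ℂ))) /
           (2 * (1 + 2 * (δ : ℂ)))) * (Φ 2 * Φ (k - 1))) := by
  have hδ2 : δ < 2 := by omega
  rw [← MvPolynomial.algebraMap_eq] at hΦser ⊢
  rw [hΦser, X_pow_add_mk_eq_egf hδ2, heat_egf_iff, forall_spread_iff hδ2,
    heat_recursion_iff hδ u Φ L₂ L₂.map_one_eq_zero]

/-- The formal power series `Φ = X^δ + Σ_{k≥2} Φ_k X^{2k+δ}/(2k+δ)!` over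
`R = ℂ[x₂,…,x_{n+1}]` satisfies `(1/2)Φ'' + u X² Φ = L₂Φ` (with `L₂` the
derivation sending `x_k ↦ p_{k+1}`, acting coefficientwise on series) iff the
coefficients satisfy the recursion of Theorem 3.3 of the paper.
Here the variable `MvPolynomial.X i` stands for `x_{i+2}` and `p i` for
`p_{i+3}`. -/
theorem series_heat_recursion_iff
    (n : ℕ) (hn : 1 ≤ n) (δ : ℕ) (hδ : δ = 0 ∨ δ = 1)
    (p : Fin n → MvPolynomial (Fin n) ℂ)
    (L₂ : Derivation ℂ (MvPolynomial (Fin n) ℂ) (MvPolynomial (Fin n) ℂ))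
    (hL₂ : L₂ = MvPolynomial.mkDerivation ℂ p)
    (u : MvPolynomial (Fin n) ℂ)
    (Φ : ℕ → MvPolynomial (Fin n) ℂ)
    (Φser : PowerSeries (MvPolynomial (Fin n) ℂ))
    (hΦser : Φser = PowerSeries.X ^ δ + PowerSeries.mk fun m =>
      if 4 + δ ≤ m ∧ (m - δ) % 2 = 0 then
        MvPolynomial.C ((m.factorial : ℂ))⁻¹ * Φ ((m - δ) / 2) else 0) :
    (PowerSeries.C (R := MvPolynomial (Fin n) ℂ) (MvPolynomial.C ((1 : ℂ) / 2)) *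
          PowerSeries.derivative (R := MvPolynomial (Fin n) ℂ)
            (PowerSeries.derivative (R := MvPolynomial (Fin n) ℂ) Φser)
        + PowerSeries.C (R := MvPolynomial (Fin n) ℂ) u * PowerSeries.X ^ 2 * Φser
      = PowerSeries.mk fun m => L₂ (PowerSeries.coeff (R := MvPolynomial (Fin n) ℂ) m Φser)) ↔
    (Φ 2 = MvPolynomial.C (-4 * (1 + 2 * (δ : ℂ))) * u ∧
     Φ 3 = 2 * L₂ (Φ 2) ∧
     ∀ k ≥ 3, Φ (k + 1) = 2 * L₂ (Φ k) +
       MvPolynomial.C (((2 * (k : ℂ) + (δ : ℂ) - 1) * (2 * (k : ℂ) + (δ : ℂ))) /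
           (2 * (1 + 2 * (δ : ℂ)))) * (Φ 2 * Φ (k - 1))) :=
  series_heat_recursion_iff_general n δ hδ L₂ u Φ Φser hΦser
end

section
/- Let n ≥ 1, κ ∈ ℂ, and for k = 2,…,n+1 let p_{k+1} : ℂⁿ → ℂ be a polynomial function of x = (x₂,…,x_{n+1}) that is weighted homogeneous of weight 2(k+1): p_{k+1}(λ⁴x₂, λ⁶x₃, …, λ^{2(n+1)}x_{n+1}) = λ^{2(k+1)} p_{k+1}(x₂,…,x_{n+1}) for all λ ∈ ℂ and all x. Let a, b, c, d ∈ ℂ with ad − bc = 1, let V, U ⊆ ℂ be open with ct + d ≠ 0 and μ(t) := (at+b)/(ct+d) ∈ V for all t ∈ U, and let h, x₂,…,x_{n+1} : V → ℂ be complex-differentiable with h' = −h² − κ x₂ and x_k' = p_{k+1}(x₂,…,x_{n+1}) − 2k h x_k on V. Then the functions ĥ(t) = h(μ(t))/(ct+d)² + c/(ct+d) and x̂_k(t) = x_k(μ(t))/(ct+d)^{2k} satisfy the same system on U: ĥ' = −ĥ² − κ x̂₂ and x̂_k' = p_{k+1}(x̂₂,…,x̂_{n+1}) − 2k ĥ x̂_k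 for k = 2,…,n+1. -/
/-!
A Möbius map `μ(t) = (at+b)/(ct+d)` with `ad - bc = 1` has `μ' = (ct+d)⁻²`. Hence a function of
weight `w`, pulled back as `f(μ(t))/(ct+d)^w`, has derivative `f'(μ)/(ct+d)^(w+2)` plus a term
`-w c f(μ)/(ct+d)^(w+1)`. The shift `c/(ct+d)` in `ĥ` is exactly what absorbs these extra terms
into `-2k ĥ x̂_k` and `-ĥ²`, while weighted homogeneity of `p_{k+1}` with `λ = (ct+d)⁻¹` turns
`p_{k+1}(x̂)` into `p_{k+1}(x(μ))/(ct+d)^(2k+2)`.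
-/

noncomputable def moebius (a b c d t : ℂ) : ℂ := (a * t + b) / (c * t + d)

section Moebius

variable {a b c d t : ℂ}

theorem hasDerivAt_affine (c d t : ℂ) : HasDerivAt (fun t => c * t + d) c t := by
  simpa using ((hasDerivAt_id t).const_mul c).add_const d

theorem hasDerivAt_moebius (hs : c * t + d ≠ 0) :
    HasDerivAt (moebius a b c d) ((a * d - b * c) / (c * t + d) ^ 2) t :=
  ((hasDerivAt_affine a b t).div (hasDerivAt_affine c d t) hs).congr_deriv (by ring)

theorem hasDerivAt_comp_moebius_div_pow {f : ℂ → ℂ} {f' : ℂ} (w : ℕ) (habcd : a * d - b * c = 1)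
    (hs : c * t + d ≠ 0) (hf : HasDerivAt f f' (moebius a b c d t)) :
    HasDerivAt (fun t => f (moebius a b c d t) / (c * t + d) ^ w)
      (f' / (c * t + d) ^ (w + 2) - w * c * f (moebius a b c d t) / (c * t + d) ^ (w + 1)) t := by
  have hμ := hasDerivAt_moebius (a := a) (b := b) hs
  rw [habcd] at hμ
  refine ((hf.comp t hμ).div ((hasDerivAt_affine c d t).pow w) (pow_ne_zero w hs)).congr_deriv ?_
  simp only [Pi.pow_apply, Function.comp_apply]
  rcases w with _ | w
  · simp [div_eq_mul_inv]
  · rw [Nat.add_sub_cancel]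
    push_cast
    field_simp
    ring

theorem hasDerivAt_riccati_pullback {h : ℂ → ℂ} {y κ : ℂ} (habcd : a * d - b * c = 1)
    (hs : c * t + d ≠ 0)
    (hh : HasDerivAt h (-h (moebius a b c d t) ^ 2 - κ * y) (moebius a b c d t)) :
    HasDerivAt (fun t => h (moebius a b c d t) / (c * t + d) ^ 2 + c / (c * t + d))
      (-(h (moebius a b c d t) / (c * t + d) ^ 2 + c / (c * t + d)) ^ 2
        - κ * (y / (c * t + d) ^ 4)) t := by
  have hshift : HasDerivAt (fun t => c / (c * t + d)) (-(c * c) / (c * t + d) ^ 2) t :=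
    ((hasDerivAt_const t c).div (hasDerivAt_affine c d t) hs).congr_deriv (by ring)
  refine ((hasDerivAt_comp_moebius_div_pow 2 habcd hs hh).add hshift).congr_deriv ?_
  field_simp
  ring

theorem hasDerivAt_weighted_pullback {x : ℂ → ℂ} {H P : ℂ} (w : ℕ) (habcd : a * d - b * c = 1)
    (hs : c * t + d ≠ 0)
    (hx : HasDerivAt x (P - w * H * x (moebius a b c d t)) (moebius a b c d t)) :
    HasDerivAt (fun t => x (moebius a b c d t) / (c * t + d) ^ w)
      (P / (c * t + d) ^ (w + 2) - w * (H / (c * t + d) ^ 2 + c / (c * t + d))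
        * (x (moebius a b c d t) / (c * t + d) ^ w)) t := by
  refine (hasDerivAt_comp_moebius_div_pow w habcd hs hx).congr_deriv ?_
  field_simp
  ring

end Moebius

theorem SL2_action_on_dynamical_system_general
    (n : ℕ) (hn : 1 ≤ n) (κ : ℂ)
    (p : Fin n → (Fin n → ℂ) → ℂ)
    (hhom : ∀ (i : Fin n) (lam : ℂ) (x : Fin n → ℂ),
      p i (fun j => lam ^ (2 * ((j : ℕ) + 2)) * x j) = lam ^ (2 * ((i : ℕ) + 3)) * p i x)
    (a b c d : ℂ) (habcd : a * d - b * c = 1)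
    (V U : Set ℂ) (hV : IsOpen V)
    (hcd : ∀ t ∈ U, c * t + d ≠ 0)
    (μ : ℂ → ℂ) (hμ : ∀ t, μ t = (a * t + b) / (c * t + d))
    (hmap : ∀ t ∈ U, μ t ∈ V)
    (h : ℂ → ℂ) (x : Fin n → ℂ → ℂ)
    (hh : DifferentiableOn ℂ h V) (hx : ∀ i, DifferentiableOn ℂ (x i) V)
    (hsysh : ∀ t ∈ V, deriv h t = -(h t) ^ 2 - κ * x ⟨0, hn⟩ t)
    (hsysx : ∀ i, ∀ t ∈ V,
      deriv (x i) t = p i (fun j => x j t) - 2 * ((i : ℕ) + 2) * h t * x i t)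
    (hHat : ℂ → ℂ)
    (hhHat : ∀ t, hHat t = h (μ t) / (c * t + d) ^ 2 + c / (c * t + d))
    (xHat : Fin n → ℂ → ℂ)
    (hxHat : ∀ i t, xHat i t = x i (μ t) / (c * t + d) ^ (2 * ((i : ℕ) + 2))) :
    (∀ t ∈ U, deriv hHat t = -(hHat t) ^ 2 - κ * xHat ⟨0, hn⟩ t) ∧
    (∀ i, ∀ t ∈ U,
      deriv (xHat i) t = p i (fun j => xHat j t) - 2 * ((i : ℕ) + 2) * hHat t * xHat i t) := by
  obtain rfl : μ = moebius a b c d := funext hμ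
  obtain rfl : hHat = fun t => h (moebius a b c d t) / (c * t + d) ^ 2 + c / (c * t + d) :=
    funext hhHat
  obtain rfl : xHat = fun i t => x i (moebius a b c d t) / (c * t + d) ^ (2 * ((i : ℕ) + 2)) :=
    funext₂ hxHat
  refine ⟨fun t ht => ?_, fun i t ht => ?_⟩
  · have hh' := (hh.differentiableAt (hV.mem_nhds (hmap t ht))).hasDerivAt
    rw [hsysh _ (hmap t ht)] at hh'
    exact (hasDerivAt_riccati_pullback habcd (hcd t ht) hh').deriv
  · have hx' := ((hx i).differentiableAt (hV.mem_nhds (hmap t ht))).hasDerivAt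
    rw [hsysx i _ (hmap t ht), show (2 * ((i : ℂ) + 2)) = ((2 * ((i : ℕ) + 2) : ℕ) : ℂ) by
      push_cast; ring] at hx'
    have hp : p i (fun j => x j (moebius a b c d t) / (c * t + d) ^ (2 * ((j : ℕ) + 2)))
        = p i (fun j => x j (moebius a b c d t)) / (c * t + d) ^ (2 * ((i : ℕ) + 2) + 2) := by
      simp only [div_eq_inv_mul, ← inv_pow, hhom]
      ring
    rw [(hasDerivAt_weighted_pullback _ habcd (hcd t ht) hx').deriv, hp]
    push_cast
    ring

/-- The action of `SL(2,ℂ)` on solutions of the homogeneous polynomial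
dynamical system `h' = -h² - κx₂`, `x_k' = p_{k+1}(x) - 2k h x_k` associated
with the heat equation. Here `i : Fin n` stands for `k = i + 2`, so
`x i = x_{i+2}` and `p i = p_{i+3}`. -/
theorem SL2_action_on_dynamical_system
    (n : ℕ) (hn : 1 ≤ n) (κ : ℂ)
    (p : Fin n → (Fin n → ℂ) → ℂ)
    (hpoly : ∀ i, ∃ P : MvPolynomial (Fin n) ℂ, ∀ x, p i x = MvPolynomial.eval x P)
    (hhom : ∀ (i : Fin n) (lam : ℂ) (x : Fin n → ℂ),
      p i (fun j => lam ^ (2 * ((j : ℕ) + 2)) * x j) = lam ^ (2 * ((i : ℕ) + 3)) * p i x)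
    (a b c d : ℂ) (habcd : a * d - b * c = 1)
    (V U : Set ℂ) (hV : IsOpen V) (hU : IsOpen U)
    (hcd : ∀ t ∈ U, c * t + d ≠ 0)
    (μ : ℂ → ℂ) (hμ : ∀ t, μ t = (a * t + b) / (c * t + d))
    (hmap : ∀ t ∈ U, μ t ∈ V)
    (h : ℂ → ℂ) (x : Fin n → ℂ → ℂ)
    (hh : DifferentiableOn ℂ h V) (hx : ∀ i, DifferentiableOn ℂ (x i) V)
    (hsysh : ∀ t ∈ V, deriv h t = -(h t) ^ 2 - κ * x ⟨0, hn⟩ t)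
    (hsysx : ∀ i, ∀ t ∈ V,
      deriv (x i) t = p i (fun j => x j t) - 2 * ((i : ℕ) + 2) * h t * x i t)
    (hHat : ℂ → ℂ)
    (hhHat : ∀ t, hHat t = h (μ t) / (c * t + d) ^ 2 + c / (c * t + d))
    (xHat : Fin n → ℂ → ℂ)
    (hxHat : ∀ i t, xHat i t = x i (μ t) / (c * t + d) ^ (2 * ((i : ℕ) + 2))) :
    (∀ t ∈ U, deriv hHat t = -(hHat t) ^ 2 - κ * xHat ⟨0, hn⟩ t) ∧
    (∀ i, ∀ t ∈ U,
      deriv (xHat i) t = p i (fun j => xHat j t) - 2 * ((i : ℕ) + 2) * hHat t * xHat i t) :=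
  SL2_action_on_dynamical_system_general n hn κ p hhom a b c d habcd V U hV hcd μ hμ hmap h x hh hx
    hsysh hsysx hHat hhHat xHat hxHat
end

section
/- Let n ≥ 0, b ∈ ℂ with b ≠ 0, let a₁,…,a_{n+1} ∈ ℂ, and define h(t) = (1/b) Σ_{k=1}^{n+1} 1/(t − a_k) on V = ℂ \ {a₁,…,a_{n+1}}. For t ∈ V let S(t) be the (n+2)×(n+2) matrix with rows and columns indexed by 0,…,n+1 and entries S(t)_{ij} = b · h^{(i−j)}(t)/(i−j)! for i ≥ j, S(t)_{i,i+1} = −(i+1) for 0 ≤ i ≤ n, and S(t)_{ij} = 0 for j > i+1, where h^{(m)} denotes the m-th complex derivative of h. Then det S(t) = 0 for all t ∈ V. -/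
/-!
With `P = ∏ₖ (X - aₖ)`, the function `b h = Σₖ 1/(t - aₖ)` is the logarithmic derivative `P'/P`.
Differentiating `P · (b h) = P'` with the Leibniz rule and dividing by factorials shows that the
Taylor coefficients `vⱼ = P⁽ʲ⁾(t)/j!` satisfy `Σ_{j ≤ i} vⱼ · b h⁽ⁱ⁻ʲ⁾(t)/(i-j)! = (i+1) v_{i+1}`,
which is exactly `S(t) v = 0`: for the last row because `v_{n+2} = 0`, as `deg P = n + 1`.
Since `v₀ = P(t) ≠ 0`, the matrix `S(t)` is singular.
-/

open Finset Polynomial Filter Topology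
open scoped Nat

section TaylorCoeff

variable {𝕜 : Type*} [NontriviallyNormedField 𝕜]

noncomputable def taylorCoeff (f : 𝕜 → 𝕜) (x : 𝕜) (k : ℕ) : 𝕜 :=
  iteratedDeriv k f x / k !

theorem taylorCoeff_zero (f : 𝕜 → 𝕜) (x : 𝕜) : taylorCoeff f x 0 = f x := by
  simp [taylorCoeff]

theorem taylorCoeff_deriv [CharZero 𝕜] (f : 𝕜 → 𝕜) (x : 𝕜) (m : ℕ) :
    taylorCoeff (deriv f) x m = (m + 1) * taylorCoeff f x (m + 1) := by
  have : ((m + 1 : ℕ) : 𝕜) ≠ 0 := Nat.cast_ne_zero.2 m.succ_ne_zero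
  rw [taylorCoeff, taylorCoeff, iteratedDeriv_succ', Nat.factorial_succ, Nat.cast_mul]
  field_simp
  push_cast
  ring

theorem taylorCoeff_mul [CharZero 𝕜] {f g : 𝕜 → 𝕜} {x : 𝕜} {m : ℕ} (hf : ContDiffAt 𝕜 m f x)
    (hg : ContDiffAt 𝕜 m g x) :
    taylorCoeff (f * g) x m = ∑ j ∈ range (m + 1), taylorCoeff f x j * taylorCoeff g x (m - j) := by
  rw [taylorCoeff, iteratedDeriv_mul hf hg, sum_div]
  refine sum_congr rfl fun j hj => ?_
  rw [Nat.cast_choose 𝕜 (Nat.lt_succ_iff.1 (mem_range.1 hj)), taylorCoeff, taylorCoeff]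
  have : (m ! : 𝕜) ≠ 0 := Nat.cast_ne_zero.2 m.factorial_ne_zero
  field_simp

theorem taylorCoeff_polynomial_eval (p : 𝕜[X]) (x : 𝕜) (k : ℕ) :
    taylorCoeff (fun z => p.eval z) x k = (derivative^[k] p).eval x / k ! := by
  rw [taylorCoeff]
  congr 1
  induction k generalizing p with
  | zero => simp
  | succ k ih =>
    rw [iteratedDeriv_succ', funext fun z => Polynomial.deriv p (x := z), ih,
      Function.iterate_succ_apply]

theorem sum_taylorCoeff_mul_eq_of_deriv_eq_mul [CharZero 𝕜] {f g : 𝕜 → 𝕜} {x : 𝕜} {m : ℕ}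
    (hf : ContDiffAt 𝕜 m f x) (hg : ContDiffAt 𝕜 m g x) (hfg : deriv f =ᶠ[𝓝 x] f * g) :
    ∑ j ∈ range (m + 1), taylorCoeff f x j * taylorCoeff g x (m - j) =
      (m + 1) * taylorCoeff f x (m + 1) := by
  rw [← taylorCoeff_mul hf hg, ← taylorCoeff_deriv, taylorCoeff, taylorCoeff, hfg.iteratedDeriv_eq]

end TaylorCoeff

theorem Polynomial.eval_derivative_prod_X_sub_C {K ι : Type*} [Field K] (s : Finset ι) (a : ι → K)
    {x : K} (hx : ∀ k ∈ s, x ≠ a k) :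
    (∏ k ∈ s, (X - C (a k))).derivative.eval x = (∏ k ∈ s, (x - a k)) * ∑ k ∈ s, (x - a k)⁻¹ := by
  classical
  induction s using Finset.induction_on with
  | empty => simp
  | insert k s hk ih =>
    rw [forall_mem_insert] at hx
    have hxk : x - a k ≠ 0 := sub_ne_zero.2 hx.1
    rw [prod_insert hk, prod_insert hk, sum_insert hk, derivative_mul, eval_add, eval_mul, eval_mul,
      ih hx.2, eval_prod]
    simp only [derivative_sub, derivative_X, derivative_C, sub_zero, eval_one, eval_sub, eval_X,
      eval_C]
    field_simp

theorem Matrix.det_eq_zero_of_convolution_recurrence {R : Type*} [CommRing R] [IsDomain R]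
    {N : ℕ} (M : Matrix (Fin N) (Fin N) R) (g v : ℕ → R)
    (hM : ∀ i j : Fin N, M i j =
      if (j : ℕ) = (i : ℕ) + 1 then -(((i : ℕ) + 1 : R))
      else if (j : ℕ) ≤ (i : ℕ) then g ((i : ℕ) - (j : ℕ)) else 0)
    (hv0 : v 0 ≠ 0) (hvN : v N = 0)
    (hrec : ∀ i < N, ∑ j ∈ range (i + 1), v j * g (i - j) = (i + 1) * v (i + 1)) :
    M.det = 0 := by
  have hN : 0 < N := Nat.pos_of_ne_zero fun hN => hv0 (hN ▸ hvN)
  rw [← Matrix.exists_mulVec_eq_zero_iff]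
  refine ⟨fun j => v j, fun hv => hv0 (congrFun hv ⟨0, hN⟩), funext fun i => ?_⟩
  have hsplit : ∀ j, M i j * v j = (if (j : ℕ) ≤ i then v j * g (i - j) else 0)
      - (if (j : ℕ) = i + 1 then (i + 1) * v (i + 1) else 0) := by
    intro j
    rw [hM]
    split_ifs with hsuper
    · omega
    · rw [hsuper]; ring
    · ring
    · ring
  simp only [Matrix.mulVec, dotProduct, hsplit, Finset.sum_sub_distrib, Pi.zero_apply]
  rw [Fin.sum_univ_eq_sum_range (fun j => if j ≤ i then v j * g (i - j) else 0),
    Fin.sum_univ_eq_sum_range (fun j => if j = i + 1 then (i + 1) * v (i + 1) else (0 : R)),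
    ← Finset.sum_filter, Finset.sum_ite_eq', sub_eq_zero]
  have hfilter : (range N).filter (· ≤ (i : ℕ)) = range (i + 1) := by
    ext j; simp only [mem_filter, mem_range]; omega
  rw [hfilter, hrec i i.isLt]
  split_ifs with hi
  · rfl
  · rw [show (i : ℕ) + 1 = N by simp at hi; omega, hvN, mul_zero]

/-- The rational function `h(t) = (1/b) Σ_{k=1}^{n+1} 1/(t - a_k)` satisfies
`det S_n(h) = 0`, where `S_n(h)` is the `(n+2)×(n+2)` matrix with entries
`b h^{(i-j)}/(i-j)!` for `i ≥ j`, `-(i+1)` on the superdiagonal and `0`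
above it. -/
theorem rational_solution_det_eq_zero
    (n : ℕ) (b : ℂ) (hb : b ≠ 0) (a : Fin (n + 1) → ℂ)
    (h : ℂ → ℂ) (hh : ∀ t, h t = (1 / b) * ∑ k, 1 / (t - a k))
    (S : ℂ → Matrix (Fin (n + 2)) (Fin (n + 2)) ℂ)
    (hS : ∀ (t : ℂ) (i j : Fin (n + 2)),
      S t i j =
        if (j : ℕ) = (i : ℕ) + 1 then -(((i : ℕ) + 1 : ℂ))
        else if (j : ℕ) ≤ (i : ℕ) then
          b * iteratedDeriv ((i : ℕ) - (j : ℕ)) h t / ((i : ℕ) - (j : ℕ)).factorial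
        else 0) :
    ∀ t : ℂ, (∀ k, t ≠ a k) → (S t).det = 0 := by
  intro t ht
  set P : ℂ[X] := ∏ k, (X - C (a k))
  set G : ℂ → ℂ := fun s => ∑ k, (s - a k)⁻¹
  have hbh : (fun s => b * h s) = G := funext fun s => by simp [G, hh, hb]
  have hPG : deriv (fun s => P.eval s) =ᶠ[𝓝 t] (fun s => P.eval s) * G := by
    filter_upwards [eventually_all.2 fun k => eventually_ne_nhds (ht k)] with s hs
    rw [Polynomial.deriv, eval_derivative_prod_X_sub_C _ _ fun k _ => hs k]
    simp [P, eval_prod, G]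
  have hG : ContDiffAt ℂ ⊤ G t := by fun_prop (disch := simp [sub_ne_zero, ht])
  refine Matrix.det_eq_zero_of_convolution_recurrence (S t) (taylorCoeff G t)
    (taylorCoeff (fun s => P.eval s) t) (fun i j => ?_) ?_ ?_ fun i _ => ?_
  · rw [hS, taylorCoeff, ← hbh, iteratedDeriv_const_mul_field]
  · simp [taylorCoeff_zero, P, eval_prod, prod_ne_zero_iff, sub_ne_zero, ht]
  · rw [taylorCoeff_polynomial_eval, iterate_derivative_eq_zero, eval_zero, zero_div]
    simp [P]
  · exact sum_taylorCoeff_mul_eq_of_deriv_eq_mul (P.contDiff_aeval _).contDiffAt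
      (hG.of_le le_top) hPG
end

section
/- Let a₁, a₂, a₃ ∈ ℂ and define y(t) = −2(1/(t − a₁) + 1/(t − a₂) + 1/(t − a₃)) on V = ℂ \ {a₁, a₂, a₃}. Then y satisfies the Chazy-12 equation with parameter k = 2: y''' = 2 y y'' − 3 (y')² + (1/8)(6 y' − y²)² at every point of V. -/
/-! With `uᵢ = (t - aᵢ)⁻¹` the derivatives are `y⁽ᵏ⁾ = -2 (-1)ᵏ k! ∑ uᵢᵏ⁺¹`, so the equation
becomes a polynomial relation among the power sums `p₁, …, p₄` of `u₁, u₂, u₃`. By Newton's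
identities that relation reads `24 e₄ = 0`, which holds because the fourth elementary symmetric
polynomial vanishes in three variables. -/

open Finset Nat

section

variable {𝕜 : Type*} [NontriviallyNormedField 𝕜]

theorem iteratedDeriv_inv_sub (k : ℕ) (a : 𝕜) :
    iteratedDeriv k (fun z => (z - a)⁻¹) = fun z => (-1) ^ k * k ! * ((z - a)⁻¹) ^ (k + 1) := by
  rw [iteratedDeriv_comp_sub_const, iteratedDeriv_eq_iterate]
  ext z
  rw [iter_deriv_inv, show (-1 - k : ℤ) = -((k + 1 : ℕ) : ℤ) by push_cast; ring, zpow_neg,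
    zpow_natCast, inv_pow]

theorem iteratedDeriv_sum_inv_sub {ι : Type*} (s : Finset ι) (a : ι → 𝕜) (k : ℕ) {z : 𝕜}
    (hz : ∀ i ∈ s, z ≠ a i) :
    iteratedDeriv k (fun z => ∑ i ∈ s, (z - a i)⁻¹) z =
      (-1) ^ k * k ! * ∑ i ∈ s, ((z - a i)⁻¹) ^ (k + 1) := by
  rw [iteratedDeriv_fun_sum fun i hi => ?_, mul_sum]
  · simp only [iteratedDeriv_inv_sub]
  · exact ((contDiffAt_id.sub contDiffAt_const).inv (sub_ne_zero.2 (hz i hi)))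

end

theorem chazy12_power_sums {R : Type*} [Field R] [CharZero R] (u v w : R) :
    12 * (u ^ 4 + v ^ 4 + w ^ 4) =
      2 * (-2 * (u + v + w)) * (-4 * (u ^ 3 + v ^ 3 + w ^ 3))
        - 3 * (2 * (u ^ 2 + v ^ 2 + w ^ 2)) ^ 2
        + (1 / 8) * (6 * (2 * (u ^ 2 + v ^ 2 + w ^ 2)) - (-2 * (u + v + w)) ^ 2) ^ 2 := by
  ring

/-- `y(t) = -2(1/(t-a₁) + 1/(t-a₂) + 1/(t-a₃))` is a solution of the
Chazy-12 equation with parameter `k = 2`: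
`y''' = 2yy'' - 3(y')² + (1/8)(6y' - y²)²`. -/
theorem rational_solution_chazy12
    (a₁ a₂ a₃ : ℂ) (y : ℂ → ℂ)
    (hy : ∀ t, y t = -2 * (1 / (t - a₁) + 1 / (t - a₂) + 1 / (t - a₃))) :
    ∀ t : ℂ, t ≠ a₁ → t ≠ a₂ → t ≠ a₃ →
      deriv (deriv (deriv y)) t =
        2 * y t * deriv (deriv y) t - 3 * (deriv y t) ^ 2
          + (1 / 8) * (6 * deriv y t - y t ^ 2) ^ 2 := by
  intro t h₁ h₂ h₃
  set a : Fin 3 → ℂ := ![a₁, a₂, a₃]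
  have hy_sum : y = fun z => -2 * ∑ i, (z - a i)⁻¹ := by
    funext z
    simp [hy, a, Fin.sum_univ_three]
  have hderiv (k : ℕ) : iteratedDeriv k y t = -2 * ((-1) ^ k * k ! *
      ((t - a₁)⁻¹ ^ (k + 1) + (t - a₂)⁻¹ ^ (k + 1) + (t - a₃)⁻¹ ^ (k + 1))) := by
    rw [hy_sum, iteratedDeriv_const_mul_field,
      iteratedDeriv_sum_inv_sub _ _ _ (by simp [Fin.forall_fin_succ, a, *])]
    simp [a, Fin.sum_univ_three]
  have y₀ := hderiv 0
  have y₁ := hderiv 1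
  have y₂ := hderiv 2
  have y₃ := hderiv 3
  simp only [iteratedDeriv_succ, iteratedDeriv_zero] at y₀ y₁ y₂ y₃
  rw [y₀, y₁, y₂, y₃]
  simp only [factorial]
  linear_combination chazy12_power_sums (t - a₁)⁻¹ (t - a₂)⁻¹ (t - a₃)⁻¹
end

section
/- Let a, b ∈ ℂ and define h(t) = (1/2)(1/(t − a) + 1/(t − b)) on V = ℂ \ {a, b}. Then h satisfies h'' + 6 h h' + 4 h³ = 0 at every point of V. -/
/-!
Each simple pole `u = (t - a)⁻¹` solves the Riccati equation `u' = -u²`, hence `u'' = 2u³`.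
For `h = (u + v) / 2` this gives `h' = -(u² + v²) / 2` and `h'' = u³ + v³`, and the expression
`h'' + 6hh' + 4h³` becomes a polynomial identity in `u` and `v`.
-/

open Filter Topology

section

variable {𝕜 : Type*} [NontriviallyNormedField 𝕜] {a b t : 𝕜}

def poleSum (c a b s : 𝕜) : 𝕜 := c * ((s - a)⁻¹ + (s - b)⁻¹)

theorem hasDerivAt_inv_sub (ht : t ≠ a) :
    HasDerivAt (fun s => (s - a)⁻¹) (-(t - a)⁻¹ ^ 2) t := by
  simpa [inv_pow] using (hasDerivAt_inv (sub_ne_zero.mpr ht)).comp_sub_const t a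

theorem hasDerivAt_neg_inv_sub_sq (ht : t ≠ a) :
    HasDerivAt (fun s => -(s - a)⁻¹ ^ 2) (2 * (t - a)⁻¹ ^ 3) t :=
  ((hasDerivAt_inv_sub ht).fun_pow 2).fun_neg.congr_deriv (by push_cast; ring)

theorem hasDerivAt_poleSum (c : 𝕜) (ha : t ≠ a) (hb : t ≠ b) :
    HasDerivAt (poleSum c a b) (c * (-(t - a)⁻¹ ^ 2 + -(t - b)⁻¹ ^ 2)) t :=
  ((hasDerivAt_inv_sub ha).add (hasDerivAt_inv_sub hb)).const_mul c

theorem deriv_poleSum_eventuallyEq (c : 𝕜) (ha : t ≠ a) (hb : t ≠ b) :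
    deriv (poleSum c a b) =ᶠ[𝓝 t] fun s => c * (-(s - a)⁻¹ ^ 2 + -(s - b)⁻¹ ^ 2) := by
  filter_upwards [isOpen_compl_singleton.mem_nhds ha, isOpen_compl_singleton.mem_nhds hb]
    with s hsa hsb
  exact (hasDerivAt_poleSum c hsa hsb).deriv

theorem deriv_deriv_poleSum (c : 𝕜) (ha : t ≠ a) (hb : t ≠ b) :
    deriv (deriv (poleSum c a b)) t = c * (2 * (t - a)⁻¹ ^ 3 + 2 * (t - b)⁻¹ ^ 3) := by
  rw [(deriv_poleSum_eventuallyEq c ha hb).deriv_eq]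
  exact (((hasDerivAt_neg_inv_sub_sq ha).add (hasDerivAt_neg_inv_sub_sq hb)).const_mul c).deriv

end

/-- `h(t) = (1/2)(1/(t-a) + 1/(t-b))` is a solution of the equation
`h'' + 6hh' + 4h³ = 0` (the ODE associated with the heat equation for
`n = 1`). -/
theorem rational_solution_case_n_one
    (a b : ℂ) (h : ℂ → ℂ)
    (hh : ∀ t, h t = (1 / 2) * (1 / (t - a) + 1 / (t - b))) :
    ∀ t : ℂ, t ≠ a → t ≠ b →
      deriv (deriv h) t + 6 * h t * deriv h t + 4 * h t ^ 3 = 0 := by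
  intro t ha hb
  obtain rfl : h = poleSum (1 / 2) a b := funext fun s => by simp only [hh, poleSum, one_div]
  rw [deriv_deriv_poleSum _ ha hb, (hasDerivAt_poleSum _ ha hb).deriv, poleSum]
  ring
end

section
/- Let c₄ ∈ ℂ, let V ⊆ ℂ be open, and let h, x₂, x₃ : V → ℂ be complex-differentiable functions satisfying h' = −h² + x₂, x₂' = x₃ − 4 h x₂, and x₃' = c₄ x₂² − 6 h x₃ on V. Then h satisfies the third-order equation h''' + 12 h h'' − 18 (h')² + (24 − c₄)(h' + h²)² = 0 at every point of V. -/
/-! Along the system, `h'`, `h'' = 2h³ - 6hx₂ + x₃` and `h'''` are polynomials in `h, x₂, x₃`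
(each derivative of such a polynomial is again one, by the chain rule and the system);
substituting them, the claimed expression vanishes identically as a polynomial. -/

open Set

section RiccatiSystem

variable {𝕜 : Type*} [NontriviallyNormedField 𝕜] {c₄ : 𝕜} {V : Set 𝕜} {h x₂ x₃ : 𝕜 → 𝕜}

theorem deriv_deriv_eqOn_of_system (hV : IsOpen V)
    (hh : DifferentiableOn 𝕜 h V) (hx₂ : DifferentiableOn 𝕜 x₂ V)
    (hsys1 : ∀ t ∈ V, deriv h t = -(h t) ^ 2 + x₂ t)
    (hsys2 : ∀ t ∈ V, deriv x₂ t = x₃ t - 4 * h t * x₂ t) :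
    EqOn (deriv (deriv h)) (fun t => 2 * h t ^ 3 - 6 * h t * x₂ t + x₃ t) V := by
  intro t ht
  have hh' := (hh.differentiableAt (hV.mem_nhds ht)).hasDerivAt
  have hx₂' := (hx₂.differentiableAt (hV.mem_nhds ht)).hasDerivAt
  have hd : HasDerivAt (fun s => -(h s) ^ 2 + x₂ s) _ t := (hh'.pow 2).neg.add hx₂'
  rw [(EqOn.deriv hsys1 hV) ht, hd.deriv, hsys1 t ht, hsys2 t ht]
  push_cast
  ring

theorem deriv_deriv_deriv_eq_of_system (hV : IsOpen V)
    (hh : DifferentiableOn 𝕜 h V) (hx₂ : DifferentiableOn 𝕜 x₂ V)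
    (hx₃ : DifferentiableOn 𝕜 x₃ V)
    (hsys1 : ∀ t ∈ V, deriv h t = -(h t) ^ 2 + x₂ t)
    (hsys2 : ∀ t ∈ V, deriv x₂ t = x₃ t - 4 * h t * x₂ t)
    (hsys3 : ∀ t ∈ V, deriv x₃ t = c₄ * x₂ t ^ 2 - 6 * h t * x₃ t) {t : 𝕜} (ht : t ∈ V) :
    deriv (deriv (deriv h)) t =
      6 * h t ^ 2 * (-(h t) ^ 2 + x₂ t) - 6 * (-(h t) ^ 2 + x₂ t) * x₂ t
        - 6 * h t * (x₃ t - 4 * h t * x₂ t) + (c₄ * x₂ t ^ 2 - 6 * h t * x₃ t) := by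
  have hh' := (hh.differentiableAt (hV.mem_nhds ht)).hasDerivAt
  have hx₂' := (hx₂.differentiableAt (hV.mem_nhds ht)).hasDerivAt
  have hx₃' := (hx₃.differentiableAt (hV.mem_nhds ht)).hasDerivAt
  have hd : HasDerivAt (fun s => 2 * h s ^ 3 - 6 * h s * x₂ s + x₃ s) _ t :=
    (((hh'.pow 3).const_mul 2).sub ((hh'.const_mul 6).mul hx₂')).add hx₃'
  rw [(deriv_deriv_eqOn_of_system hV hh hx₂ hsys1 hsys2).deriv hV ht, hd.deriv,
    hsys1 t ht, hsys2 t ht, hsys3 t ht]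
  push_cast
  ring

end RiccatiSystem

/-- If `(h, x₂, x₃)` solves the dynamical system `h' = -h² + x₂`,
`x₂' = x₃ - 4hx₂`, `x₃' = c₄x₂² - 6hx₃`, then `h` satisfies the third-order
equation `h''' + 12hh'' - 18(h')² + (24 - c₄)(h' + h²)² = 0` (which becomes
Chazy-3 for `c₄ = 24` under `y = -6h`). -/
theorem case_n_two_ODE
    (c₄ : ℂ) (V : Set ℂ) (hV : IsOpen V)
    (h x₂ x₃ : ℂ → ℂ)
    (hh : DifferentiableOn ℂ h V)
    (hx₂ : DifferentiableOn ℂ x₂ V)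
    (hx₃ : DifferentiableOn ℂ x₃ V)
    (hsys1 : ∀ t ∈ V, deriv h t = -(h t) ^ 2 + x₂ t)
    (hsys2 : ∀ t ∈ V, deriv x₂ t = x₃ t - 4 * h t * x₂ t)
    (hsys3 : ∀ t ∈ V, deriv x₃ t = c₄ * x₂ t ^ 2 - 6 * h t * x₃ t) :
    ∀ t ∈ V,
      deriv (deriv (deriv h)) t + 12 * h t * deriv (deriv h) t
        - 18 * (deriv h t) ^ 2 + (24 - c₄) * (deriv h t + h t ^ 2) ^ 2 = 0 := by
  intro t ht
  rw [deriv_deriv_deriv_eq_of_system hV hh hx₂ hx₃ hsys1 hsys2 hsys3 ht,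
    deriv_deriv_eqOn_of_system hV hh hx₂ hsys1 hsys2 ht, hsys1 t ht]
  ring
end

section
/- Let c₄ ∈ ℂ, let V ⊆ ℂ be open, let h : V → ℂ be complex-differentiable (hence analytic), and define E(h) = h''' + 12 h h'' − 18 (h')² + (24 − c₄)(h' + h²)². Then the identity (E(h))' + 8 h · E(h) = h'''' + 20 h h''' − 24 h' h'' + 96 h² h'' − 144 h (h')² + (48 − 2c₄)(h' + h²)(h'' + 6 h h' + 4 h³) holds at every point of V. -/
/-!
A complex-differentiable `h` on an open set is analytic there, so `h, h', h'', h'''` are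
differentiable on `V`. Differentiating `E` by the chain rule then turns the identity into a
polynomial identity in `h(t), …, h''''(t)`.
-/

theorem AnalyticAt.hasDerivAt_iterate_deriv {𝕜 F : Type*} [NontriviallyNormedField 𝕜]
    [NormedAddCommGroup F] [NormedSpace 𝕜 F] [CompleteSpace F] {f : 𝕜 → F} {x : 𝕜}
    (hf : AnalyticAt 𝕜 f x) (n : ℕ) : HasDerivAt (deriv^[n] f) (deriv^[n + 1] f x) x := by
  rw [Function.iterate_succ_apply']
  exact (hf.iterated_deriv n).differentiableAt.hasDerivAt

theorem hasDerivAt_thirdOrderHeatODE {𝕜 : Type*} [NontriviallyNormedField 𝕜] (c : 𝕜)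
    {f₀ f₁ f₂ f₃ : 𝕜 → 𝕜} {d t : 𝕜} (h₀ : HasDerivAt f₀ (f₁ t) t)
    (h₁ : HasDerivAt f₁ (f₂ t) t) (h₂ : HasDerivAt f₂ (f₃ t) t) (h₃ : HasDerivAt f₃ d t) :
    HasDerivAt
      (fun s => f₃ s + 12 * f₀ s * f₂ s - 18 * f₁ s ^ 2 + (24 - c) * (f₁ s + f₀ s ^ 2) ^ 2)
      (d + 12 * (f₁ t * f₂ t + f₀ t * f₃ t) - 36 * f₁ t * f₂ t
        + 2 * (24 - c) * (f₁ t + f₀ t ^ 2) * (f₂ t + 2 * f₀ t * f₁ t)) t :=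
  (((h₃.add ((h₀.const_mul 12).mul h₂)).sub ((h₁.pow 2).const_mul 18)).add
    (((h₁.add (h₀.pow 2)).pow 2).const_mul (24 - c))).congr_deriv <| by
      push_cast [Pi.add_apply, Pi.pow_apply]
      ring

/-- For `E(h) = h''' + 12hh'' - 18(h')² + (24 - c₄)(h' + h²)²` (the ODE for
`n = 2` with `P₂ = c₄x₂²`), the identity
`(E(h))' + 8h E(h) = h'''' + 20hh''' - 24h'h'' + 96h²h'' - 144h(h')²
+ (48 - 2c₄)(h' + h²)(h'' + 6hh' + 4h³)` holds. -/
theorem case_n_two_to_n_three_identity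
    (c₄ : ℂ) (V : Set ℂ) (hV : IsOpen V)
    (h : ℂ → ℂ) (hh : DifferentiableOn ℂ h V)
    (E : ℂ → ℂ)
    (hE : ∀ t, E t = deriv (deriv (deriv h)) t + 12 * h t * deriv (deriv h) t
      - 18 * (deriv h t) ^ 2 + (24 - c₄) * (deriv h t + h t ^ 2) ^ 2) :
    ∀ t ∈ V,
      deriv E t + 8 * h t * E t =
        deriv (deriv (deriv (deriv h))) t + 20 * h t * deriv (deriv (deriv h)) t
          - 24 * deriv h t * deriv (deriv h) t + 96 * h t ^ 2 * deriv (deriv h) t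
          - 144 * h t * (deriv h t) ^ 2
          + (48 - 2 * c₄) * (deriv h t + h t ^ 2) *
              (deriv (deriv h) t + 6 * h t * deriv h t + 4 * h t ^ 3) := by
  intro t ht
  have hd := (hh.analyticOnNhd hV t ht).hasDerivAt_iterate_deriv
  have h₀ : HasDerivAt h (deriv h t) t := hd 0
  have h₁ : HasDerivAt (deriv h) (deriv (deriv h) t) t := hd 1
  have h₂ : HasDerivAt (deriv (deriv h)) (deriv (deriv (deriv h)) t) t := hd 2
  have h₃ : HasDerivAt (deriv (deriv (deriv h))) (deriv (deriv (deriv (deriv h))) t) t := hd 3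
  obtain rfl : E = _ := funext hE
  rw [(hasDerivAt_thirdOrderHeatODE c₄ h₀ h₁ h₂ h₃).deriv]
  ring
end
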